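/- Let (A, B) be a biabduction instance of quantifier-free symbolic heaps. If there exists a solution seed Δ for (A,B), then the biabduction problem (A,B) has a solution: there exist quantifier-free symbolic heaps X and Y such that A*X is satisfiable and A*X ⊨ B*Y. -/

import Mathlib

/-! ## Array separation logic (ASL): syntax and stack-heap semantics -/

/-- Terms of array separation logic: variables (named by naturals), constants,
addition, and multiplication by a constant. -/
inductive Trm : Type where
  | var : ℕ → Trm
  | const : ℕ → Trm
  | add : Trm → Trm → Trm
  | smul : ℕ → Trm → Trm

/-- A stack maps variables to naturals. -/
abbrev Stack := ℕ → ℕ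

/-- Evaluation of terms under a stack. -/
def Trm.eval (s : Stack) : Trm → ℕ
  | .var x => s x
  | .const n => n
  | .add t u => t.eval s + u.eval s
  | .smul n t => n * t.eval s

/-- Variables occurring in a term. -/
def Trm.vars : Trm → Set ℕ
  | .var x => {x}
  | .const _ => ∅
  | .add t u => t.vars ∪ u.vars
  | .smul _ t => t.vars

/-- Pure formulas: conjunctions of atomic arithmetic constraints. -/
inductive PureF : Type where
  | tru : PureF
  | eq : Trm → Trm → PureF
  | ne : Trm → Trm → PureF
  | le : Trm → Trm → PureF
  | lt : Trm → Trm → PureF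
  | and : PureF → PureF → PureF

/-- Satisfaction of pure formulas (depends only on the stack). -/
def PureF.sat (s : Stack) : PureF → Prop
  | .tru => True
  | .eq t u => t.eval s = u.eval s
  | .ne t u => t.eval s ≠ u.eval s
  | .le t u => t.eval s ≤ u.eval s
  | .lt t u => t.eval s < u.eval s
  | .and p q => p.sat s ∧ q.sat s

def PureF.vars : PureF → Set ℕ
  | .tru => ∅
  | .eq t u => t.vars ∪ u.vars
  | .ne t u => t.vars ∪ u.vars
  | .le t u => t.vars ∪ u.vars
  | .lt t u => t.vars ∪ u.vars
  | .and p q => p.vars ∪ q.vars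

/-- The (top-level) terms occurring in a pure formula. -/
def PureF.trms : PureF → List Trm
  | .tru => []
  | .eq t u => [t, u]
  | .ne t u => [t, u]
  | .le t u => [t, u]
  | .lt t u => [t, u]
  | .and p q => p.trms ++ q.trms

/-- The conjuncts of a pure formula. -/
def PureF.conjuncts : PureF → List PureF
  | .and p q => p.conjuncts ++ q.conjuncts
  | p => [p]

/-- Finite conjunction. -/
def bigAnd : List PureF → PureF
  | [] => .tru
  | p :: ps => .and p (bigAnd ps)

/-- Spatial formulas: `emp`, points-to, arrays, and separating conjunction. -/
inductive Spatial : Type where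
  | emp : Spatial
  | pto : Trm → Trm → Spatial
  | arr : Trm → Trm → Spatial
  | star : Spatial → Spatial → Spatial

/-- Heaps: finite partial functions from ℕ (locations) to ℕ (values). -/
abbrev Heap := Finmap (fun _ : ℕ => ℕ)

/-- Satisfaction of spatial formulas. -/
def Spatial.sat (s : Stack) : Spatial → Heap → Prop
  | .emp, h => h = ∅
  | .pto t u, h =>
      h.keys = {Trm.eval s t} ∧ Finmap.lookup (Trm.eval s t) h = some (Trm.eval s u)
  | .arr t u, h =>
      Trm.eval s t ≤ Trm.eval s u ∧ h.keys = Finset.Icc (Trm.eval s t) (Trm.eval s u)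
  | .star F G, h =>
      ∃ h₁ h₂ : Heap, h₁.Disjoint h₂ ∧ h = h₁ ∪ h₂ ∧ F.sat s h₁ ∧ G.sat s h₂

def Spatial.vars : Spatial → Set ℕ
  | .emp => ∅
  | .pto t u => t.vars ∪ u.vars
  | .arr t u => t.vars ∪ u.vars
  | .star F G => F.vars ∪ G.vars

/-- The (top-level) terms occurring in a spatial formula. -/
def Spatial.trms : Spatial → List Trm
  | .emp => []
  | .pto t u => [t, u]
  | .arr t u => [t, u]
  | .star F G => F.trms ++ G.trms

/-- The points-to atoms of a spatial formula, as (address, value) pairs. -/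
def Spatial.ptos : Spatial → List (Trm × Trm)
  | .emp => []
  | .pto t u => [(t, u)]
  | .arr _ _ => []
  | .star F G => F.ptos ++ G.ptos

/-- The array atoms of a spatial formula, as endpoint pairs. -/
def Spatial.arrs : Spatial → List (Trm × Trm)
  | .emp => []
  | .pto _ _ => []
  | .arr t u => [(t, u)]
  | .star F G => F.arrs ++ G.arrs

/-- The arrays of the array abstraction `⟨A⟩`: each points-to `c ↦ d` is
replaced by the single-cell array `array(c,c)`. -/
def Spatial.absArrays : Spatial → List (Trm × Trm)
  | .emp => []
  | .pto t _ => [(t, t)]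
  | .arr t u => [(t, u)]
  | .star F G => F.absArrays ++ G.absArrays

/-- Finite separating conjunction. -/
def bigStar : List Spatial → Spatial
  | [] => .emp
  | F :: Fs => .star F (bigStar Fs)

/-- Quantifier-free symbolic heaps `Π : F`. -/
structure SymHeap : Type where
  pure : PureF
  spatial : Spatial

/-- Satisfaction of quantifier-free symbolic heaps. -/
def SymHeap.sat (s : Stack) (h : Heap) (A : SymHeap) : Prop :=
  A.pure.sat s ∧ A.spatial.sat s h

def SymHeap.vars (A : SymHeap) : Set ℕ := A.pure.vars ∪ A.spatial.vars

/-- All (top-level) terms occurring in a symbolic heap. -/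
def SymHeap.trms (A : SymHeap) : List Trm := A.pure.trms ++ A.spatial.trms

/-- Lifting `*` to symbolic heaps: conjoin pure parts, `*`-conjoin spatial parts. -/
def SymHeap.star (A X : SymHeap) : SymHeap :=
  ⟨.and A.pure X.pure, .star A.spatial X.spatial⟩

/-- Satisfiability of a symbolic heap. -/
def SymHeap.Satisfiable (A : SymHeap) : Prop := ∃ (s : Stack) (h : Heap), A.sat s h

/-- Semantic entailment between quantifier-free symbolic heaps. -/
def Entails (A B : SymHeap) : Prop := ∀ (s : Stack) (h : Heap), A.sat s h → B.sat s h

/-- Existentially quantified symbolic heaps `∃ z⃗. Π : F`. -/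
structure QSymHeap : Type where
  bound : List ℕ
  body : SymHeap

/-- Satisfaction of quantified symbolic heaps: some extension of the stack on the
bound variables satisfies the body. -/
def QSymHeap.sat (s : Stack) (h : Heap) (B : QSymHeap) : Prop :=
  ∃ s' : Stack, (∀ x : ℕ, x ∉ B.bound → s' x = s x) ∧ B.body.sat s' h

/-! ## The arithmetic encodings γ, β, φ, ψ₁, ψ₂, χ (interpreted over stacks) -/

/-- `s ⊨ γ(A)`: the Presburger satisfiability encoding of `A`, i.e. the pure part
of `A` together with well-definedness and pairwise disjointness of the arrays of
the array abstraction `⟨A⟩`. -/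
def gammaSat (A : SymHeap) (s : Stack) : Prop :=
  A.pure.sat s ∧
  (∀ p ∈ A.spatial.absArrays, Trm.eval s p.1 ≤ Trm.eval s p.2) ∧
  A.spatial.absArrays.Pairwise (fun p q =>
    Trm.eval s p.2 < Trm.eval s q.1 ∨ Trm.eval s q.2 < Trm.eval s p.1)

/-- `s ⊨ β(A,B)`. -/
def betaSat (A B : SymHeap) (s : Stack) : Prop :=
  gammaSat A s ∧ gammaSat B s ∧
  (∀ p ∈ B.spatial.ptos, ∀ q ∈ A.spatial.arrs,
      Trm.eval s p.1 < Trm.eval s q.1 ∨ Trm.eval s p.1 > Trm.eval s q.2) ∧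
  (∀ p ∈ A.spatial.ptos, ∀ q ∈ B.spatial.ptos,
      Trm.eval s p.1 ≠ Trm.eval s q.1 ∨ Trm.eval s p.2 = Trm.eval s q.2)

/-- The term set `Terms(A,B)`: all terms occurring in `A` and `B`, together with
the successor terms `b_i + 1`, `d_i + 1` (array right endpoints) and
`t_i + 1`, `v_i + 1` (points-to addresses). -/
def termSet (A B : SymHeap) : List Trm :=
  A.trms ++ B.trms ++
  (A.spatial.arrs.map fun p => Trm.add p.2 (Trm.const 1)) ++
  (B.spatial.arrs.map fun p => Trm.add p.2 (Trm.const 1)) ++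
  (A.spatial.ptos.map fun p => Trm.add p.1 (Trm.const 1)) ++
  (B.spatial.ptos.map fun p => Trm.add p.1 (Trm.const 1))

/-- A solution seed for the biabduction instance `(A,B)`. -/
def IsSolutionSeed (A B : SymHeap) (Δ : PureF) : Prop :=
  (∃ s : Stack, Δ.sat s) ∧
  (∀ s : Stack, Δ.sat s → betaSat A B s) ∧
  (∀ δ ∈ Δ.conjuncts, ∃ t ∈ termSet A B, ∃ u ∈ termSet A B,
      δ = PureF.lt t u ∨ δ = PureF.eq t u) ∧
  (∀ t ∈ termSet A B, ∀ u ∈ termSet A B, ∃ δ ∈ Δ.conjuncts,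
      δ = PureF.lt t u ∨ δ = PureF.lt u t ∨ δ = PureF.eq t u)

/-- The (quantifier-free) biabduction problem `(A,B)` has a solution. -/
def HasBiabductionSolution (A B : SymHeap) : Prop :=
  ∃ X Y : SymHeap, (A.star X).Satisfiable ∧ Entails (A.star X) (B.star Y)

/-- `s ⊨ φ(A,B)` (over the array abstractions of `A` and `B`). -/
def phiSat (A B : SymHeap) (s : Stack) : Prop :=
  ∃ x : ℕ,
    (∃ p ∈ A.spatial.absArrays, Trm.eval s p.1 ≤ x ∧ x ≤ Trm.eval s p.2) ∧
    ∀ q ∈ B.spatial.absArrays, x < Trm.eval s q.1 ∨ x > Trm.eval s q.2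

/-- `s ⊨ ψ₁(A,B)`: some points-to address of `B` is covered by an array of `A`. -/
def psi1Sat (A B : SymHeap) (s : Stack) : Prop :=
  ∃ p ∈ A.spatial.arrs, ∃ q ∈ B.spatial.ptos,
    Trm.eval s p.1 ≤ Trm.eval s q.1 ∧ Trm.eval s q.1 ≤ Trm.eval s p.2

/-- `s ⊨ ψ₂(A,B)`: some pointers of `A` and `B` share an address but disagree on
their contents. -/
def psi2Sat (A B : SymHeap) (s : Stack) : Prop :=
  ∃ p ∈ A.spatial.ptos, ∃ q ∈ B.spatial.ptos,
    Trm.eval s p.1 = Trm.eval s q.1 ∧ Trm.eval s p.2 ≠ Trm.eval s q.2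

/-- `s ⊨ χ(A, ∃z⃗.Q)`. -/
def chiSat (A : SymHeap) (zs : List ℕ) (Q : SymHeap) (s : Stack) : Prop :=
  gammaSat A s ∧
  ∀ s' : Stack, (∀ x : ℕ, x ∉ zs → s' x = s x) →
    (¬ gammaSat Q s' ∨ phiSat A Q s' ∨ phiSat Q A s' ∨
      psi1Sat A Q s' ∨ psi2Sat A Q s')

/-!
Fix a stack `s` satisfying the seed; then `s ⊨ β(A,B)`. Under `s` the footprints `F_A`, `F_B` of
`A` and `B` are unions of pairwise disjoint intervals, no pointer cell of `B` lies in an array of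
`A`, and pointers of `A` and `B` at a common address agree. Take `X` to pin every term of `A` and
`B` to its value under `s` and to add pointer cells on `F_B \ F_A` with the contents `B`
prescribes, and `Y` to consist of one-cell arrays on `F_A \ F_B`. A model of `A * X` then has
domain `F_A ∪ F_B = F_B ∪ (F_A \ F_B)` and the right contents on every pointer cell of `B`, which is
all that `B * Y` asks for.
-/

namespace Finmap

variable {α β : Type*}

theorem disjoint_iff_disjoint_keys {f₁ f₂ : Finmap (fun _ : α => β)} :
    f₁.Disjoint f₂ ↔ _root_.Disjoint f₁.keys f₂.keys := by
  simp only [Finset.disjoint_left, mem_keys]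
  rfl

variable [DecidableEq α]

theorem keys_eq_empty_iff {f : Finmap (fun _ : α => β)} : f.keys = ∅ ↔ f = ∅ := by
  refine ⟨fun h => ext_lookup fun a => ?_, fun h => h ▸ keys_empty⟩
  rw [lookup_empty, lookup_eq_none, ← mem_keys, h]
  exact Finset.notMem_empty a

theorem exists_keys_eq_and_lookup_eq (K : Finset α) (g : α → β) :
    ∃ f : Finmap (fun _ : α => β), f.keys = K ∧ ∀ a ∈ K, f.lookup a = some (g a) := by
  induction K using Finset.induction_on with
  | empty => exact ⟨∅, keys_empty, by simp⟩
  | insert a K _ ih =>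
    obtain ⟨f, hkeys, hlookup⟩ := ih
    refine ⟨f.insert a (g a), ?_, ?_⟩
    · ext b
      simp [mem_keys, mem_insert, ← hkeys]
    · intro b hb
      by_cases hba : b = a
      · subst hba
        exact lookup_insert f
      · rw [lookup_insert_of_ne f hba]
        exact hlookup b ((Finset.mem_insert.1 hb).resolve_left hba)

theorem exists_union_eq_of_keys_eq_union [Inhabited β] {f : Finmap (fun _ : α => β)}
    {K₁ K₂ : Finset α} (hk : f.keys = K₁ ∪ K₂) :
    ∃ f₁ f₂ : Finmap (fun _ : α => β), f₁.keys = K₁ ∧ f₂.keys = K₂ ∧ f = f₁ ∪ f₂ := by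
  let g a := (f.lookup a).getD default
  have hg : ∀ a ∈ f, f.lookup a = some (g a) := fun a ha => by
    obtain ⟨b, hb⟩ := mem_iff.1 ha
    simp [g, hb]
  obtain ⟨f₁, hk₁, hl₁⟩ := exists_keys_eq_and_lookup_eq K₁ g
  obtain ⟨f₂, hk₂, hl₂⟩ := exists_keys_eq_and_lookup_eq K₂ g
  refine ⟨f₁, f₂, hk₁, hk₂, ext_lookup fun a => ?_⟩
  have hmem : a ∈ f ↔ a ∈ K₁ ∨ a ∈ K₂ := by rw [← mem_keys, hk, Finset.mem_union]
  by_cases h₁ : a ∈ K₁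
  · rw [lookup_union_left (by rwa [← mem_keys, hk₁]), hl₁ a h₁, hg a (hmem.2 (.inl h₁))]
  · rw [lookup_union_right (by rwa [← mem_keys, hk₁])]
    by_cases h₂ : a ∈ K₂
    · rw [hl₂ a h₂, hg a (hmem.2 (.inr h₂))]
    · rw [lookup_eq_none.2 (by tauto), lookup_eq_none.2 (by rwa [← mem_keys, hk₂])]

end Finmap

namespace Spatial

variable {F G : Spatial} {s s' : Stack} {h : Heap}

def footprint (s : Stack) : Spatial → Finset ℕ
  | .emp => ∅
  | .pto t _ => {t.eval s}
  | .arr t u => Finset.Icc (t.eval s) (u.eval s)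
  | .star F G => F.footprint s ∪ G.footprint s

-- `γ(A)` at `s` is `A.pure.sat s ∧ A.spatial.WellFormed s`.
def WellFormed (F : Spatial) (s : Stack) : Prop :=
  (∀ p ∈ F.absArrays, p.1.eval s ≤ p.2.eval s) ∧
  F.absArrays.Pairwise fun p q => p.2.eval s < q.1.eval s ∨ q.2.eval s < p.1.eval s

theorem mem_footprint {n : ℕ} :
    n ∈ F.footprint s ↔ ∃ p ∈ F.absArrays, p.1.eval s ≤ n ∧ n ≤ p.2.eval s := by
  induction F with
  | emp => simp [footprint, absArrays]
  | pto t u => simp [footprint, absArrays, le_antisymm_iff, and_comm]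
  | arr t u => simp [footprint, absArrays]
  | star F G ihF ihG => simp [footprint, absArrays, ihF, ihG, or_and_right, exists_or]

theorem mem_footprint_iff_arrs_or_ptos {n : ℕ} :
    n ∈ F.footprint s ↔ (∃ p ∈ F.arrs, p.1.eval s ≤ n ∧ n ≤ p.2.eval s) ∨
      ∃ p ∈ F.ptos, p.1.eval s = n := by
  induction F with
  | emp => simp [footprint, arrs, ptos]
  | pto t u => simp [footprint, arrs, ptos, eq_comm]
  | arr t u => simp [footprint, arrs, ptos]
  | star F G ihF ihG =>
    simp only [footprint, arrs, ptos, Finset.mem_union, ihF, ihG, List.mem_append, or_and_right,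
      exists_or]
    exact or_or_or_comm

theorem eval_mem_footprint_of_mem_ptos {p : Trm × Trm} (hp : p ∈ F.ptos) :
    p.1.eval s ∈ F.footprint s :=
  mem_footprint_iff_arrs_or_ptos.2 (.inr ⟨p, hp, rfl⟩)

theorem disjoint_footprint_iff (hF : ∀ p ∈ F.absArrays, p.1.eval s ≤ p.2.eval s)
    (hG : ∀ q ∈ G.absArrays, q.1.eval s ≤ q.2.eval s) :
    Disjoint (F.footprint s) (G.footprint s) ↔ ∀ p ∈ F.absArrays, ∀ q ∈ G.absArrays,
      p.2.eval s < q.1.eval s ∨ q.2.eval s < p.1.eval s := by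
  simp only [Finset.disjoint_left, mem_footprint]
  constructor
  · intro hdisj p hp q hq
    by_contra! hoverlap
    exact hdisj ⟨p, hp, le_max_left _ (q.1.eval s), max_le (hF p hp) hoverlap.1⟩
      ⟨q, hq, le_max_right _ _, max_le hoverlap.2 (hG q hq)⟩
  · rintro hsep n ⟨p, hp, hpn⟩ ⟨q, hq, hqn⟩
    have := hsep p hp q hq
    omega

theorem wellFormed_star : (F.star G).WellFormed s ↔
    F.WellFormed s ∧ G.WellFormed s ∧ Disjoint (F.footprint s) (G.footprint s) := by
  simp only [WellFormed, absArrays, List.forall_mem_append, List.pairwise_append]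
  constructor
  · rintro ⟨⟨hF, hG⟩, hdF, hdG, hsep⟩
    exact ⟨⟨hF, hdF⟩, ⟨hG, hdG⟩, (disjoint_footprint_iff hF hG).2 hsep⟩
  · rintro ⟨⟨hF, hdF⟩, ⟨hG, hdG⟩, hdisj⟩
    exact ⟨⟨hF, hG⟩, hdF, hdG, (disjoint_footprint_iff hF hG).1 hdisj⟩


theorem lookup_union_eval_of_mem_ptos {h₁ h₂ : Heap} (hk₁ : h₁.keys = F.footprint s)
    (hdisj : Disjoint (F.footprint s) (G.footprint s)) :
    (∀ p ∈ F.ptos, (h₁ ∪ h₂).lookup (p.1.eval s) = h₁.lookup (p.1.eval s)) ∧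
      ∀ p ∈ G.ptos, (h₁ ∪ h₂).lookup (p.1.eval s) = h₂.lookup (p.1.eval s) := by
  refine ⟨fun p hp => Finmap.lookup_union_left ?_, fun p hp => Finmap.lookup_union_right ?_⟩
  · rw [← Finmap.mem_keys, hk₁]
    exact eval_mem_footprint_of_mem_ptos hp
  · rw [← Finmap.mem_keys, hk₁]
    exact Finset.disjoint_right.1 hdisj (eval_mem_footprint_of_mem_ptos hp)

theorem sat_iff : F.sat s h ↔ F.WellFormed s ∧ h.keys = F.footprint s ∧
    ∀ p ∈ F.ptos, h.lookup (p.1.eval s) = some (p.2.eval s) := by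
  induction F generalizing h with
  | emp => simp [Spatial.sat, WellFormed, absArrays, footprint, ptos, Finmap.keys_eq_empty_iff]
  | pto t u => simp [Spatial.sat, WellFormed, absArrays, footprint, ptos]
  | arr t u => simp [Spatial.sat, WellFormed, absArrays, footprint, ptos]
  | star F G ihF ihG =>
    simp only [Spatial.sat, ihF, ihG, wellFormed_star, footprint, ptos, List.forall_mem_append]
    constructor
    · rintro ⟨h₁, h₂, hdisj, rfl, ⟨hwF, hk₁, hl₁⟩, ⟨hwG, hk₂, hl₂⟩⟩
      rw [Finmap.disjoint_iff_disjoint_keys, hk₁, hk₂] at hdisj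
      have hl := lookup_union_eval_of_mem_ptos (h₂ := h₂) hk₁ hdisj
      exact ⟨⟨hwF, hwG, hdisj⟩, by rw [Finmap.keys_union, hk₁, hk₂],
        fun p hp => (hl.1 p hp).trans (hl₁ p hp), fun p hp => (hl.2 p hp).trans (hl₂ p hp)⟩
    · rintro ⟨⟨hwF, hwG, hdisj⟩, hk, hlF, hlG⟩
      obtain ⟨h₁, h₂, hk₁, hk₂, rfl⟩ := Finmap.exists_union_eq_of_keys_eq_union hk
      have hl := lookup_union_eval_of_mem_ptos (h₂ := h₂) hk₁ hdisj
      exact ⟨h₁, h₂, by rwa [Finmap.disjoint_iff_disjoint_keys, hk₁, hk₂], rfl,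
        ⟨hwF, hk₁, fun p hp => (hl.1 p hp).symm.trans (hlF p hp)⟩,
        ⟨hwG, hk₂, fun p hp => (hl.2 p hp).symm.trans (hlG p hp)⟩⟩

theorem WellFormed.exists_sat (hw : F.WellFormed s) : ∃ h, F.sat s h := by
  induction F with
  | emp => exact ⟨∅, rfl⟩
  | pto t u =>
    exact ⟨Finmap.singleton (t.eval s) (u.eval s), Finmap.keys_singleton _ _,
      Finmap.lookup_singleton_eq⟩
  | arr t u =>
    obtain ⟨h, hk, -⟩ := Finmap.exists_keys_eq_and_lookup_eq (Finset.Icc (t.eval s) (u.eval s)) id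
    exact ⟨h, hw.1 (t, u) (by simp [absArrays]), hk⟩
  | star F G ihF ihG =>
    obtain ⟨hwF, hwG, hdisj⟩ := wellFormed_star.1 hw
    obtain ⟨h₁, hF⟩ := ihF hwF
    obtain ⟨h₂, hG⟩ := ihG hwG
    refine ⟨h₁ ∪ h₂, h₁, h₂, ?_, rfl, hF, hG⟩
    rwa [Finmap.disjoint_iff_disjoint_keys, (sat_iff.1 hF).2.1, (sat_iff.1 hG).2.1]

theorem sat_congr (hst : ∀ t ∈ F.trms, t.eval s' = t.eval s) : F.sat s' h ↔ F.sat s h := by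
  induction F generalizing h with
  | emp => rfl
  | pto t u | arr t u =>
    simp only [Spatial.sat]
    rw [hst t (by simp [trms]), hst u (by simp [trms])]
  | star F G ihF ihG =>
    simp only [trms, List.mem_append] at hst
    simp only [Spatial.sat, ihF fun t ht => hst t (.inl ht), ihG fun t ht => hst t (.inr ht)]

end Spatial

theorem PureF.sat_congr {P : PureF} {s s' : Stack} (hst : ∀ t ∈ P.trms, t.eval s' = t.eval s) :
    P.sat s' ↔ P.sat s := by
  induction P with
  | tru => rfl
  | eq t u | ne t u | le t u | lt t u =>
    simp only [PureF.sat, hst t (by simp [trms]), hst u (by simp [trms])]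
  | and P Q ihP ihQ =>
    simp only [trms, List.mem_append] at hst
    simp only [PureF.sat, ihP fun t ht => hst t (.inl ht), ihQ fun t ht => hst t (.inr ht)]

section Cells

variable (g : ℕ → ℕ) (l : List ℕ)

def ptoCells : Spatial := bigStar (l.map fun n => .pto (.const n) (.const (g n)))

def arrCells : Spatial := bigStar (l.map fun n => .arr (.const n) (.const n))

theorem footprint_ptoCells (s : Stack) : (ptoCells g l).footprint s = l.toFinset := by
  induction l with
  | nil => rfl
  | cons n l ih => simp [ptoCells, bigStar, Spatial.footprint, Trm.eval, ← ih]

theorem footprint_arrCells (s : Stack) : (arrCells l).footprint s = l.toFinset := by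
  induction l with
  | nil => rfl
  | cons n l ih => simp [arrCells, bigStar, Spatial.footprint, Trm.eval, ← ih]

theorem ptos_ptoCells : (ptoCells g l).ptos = l.map fun n => (.const n, .const (g n)) := by
  induction l with
  | nil => rfl
  | cons n l ih => simp [ptoCells, bigStar, Spatial.ptos, ← ih]

theorem ptos_arrCells : (arrCells l).ptos = [] := by
  induction l with
  | nil => rfl
  | cons n l ih => simp [arrCells, bigStar, Spatial.ptos, ← ih]

variable {l}

theorem wellFormed_ptoCells (s : Stack) (hl : l.Nodup) : (ptoCells g l).WellFormed s := by
  induction l with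
  | nil => simp [ptoCells, bigStar, Spatial.WellFormed, Spatial.absArrays]
  | cons n l ih =>
    rw [List.nodup_cons] at hl
    refine Spatial.wellFormed_star.2 ⟨?_, ih hl.2, ?_⟩
    · simp [Spatial.WellFormed, Spatial.absArrays]
    · have hfp := footprint_ptoCells g l s
      simp only [ptoCells] at hfp
      simpa [Spatial.footprint, Trm.eval, hfp] using hl.1

theorem wellFormed_arrCells (s : Stack) (hl : l.Nodup) : (arrCells l).WellFormed s := by
  induction l with
  | nil => simp [arrCells, bigStar, Spatial.WellFormed, Spatial.absArrays]
  | cons n l ih =>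
    rw [List.nodup_cons] at hl
    refine Spatial.wellFormed_star.2 ⟨?_, ih hl.2, ?_⟩
    · simp [Spatial.WellFormed, Spatial.absArrays]
    · have hfp := footprint_arrCells l s
      simp only [arrCells] at hfp
      simpa [Spatial.footprint, Trm.eval, hfp] using hl.1

theorem eval_eq_of_mem_trms_ptoCells {s s' : Stack} {t : Trm} (ht : t ∈ (ptoCells g l).trms) :
    t.eval s' = t.eval s := by
  induction l with
  | nil => simp [ptoCells, bigStar, Spatial.trms] at ht
  | cons n l ih =>
    simp only [ptoCells, List.map_cons, bigStar, Spatial.trms, List.mem_append, List.mem_cons,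
      List.not_mem_nil, or_false] at ht
    rcases ht with (rfl | rfl) | ht
    exacts [rfl, rfl, ih ht]

theorem eval_eq_of_mem_trms_arrCells {s s' : Stack} {t : Trm} (ht : t ∈ (arrCells l).trms) :
    t.eval s' = t.eval s := by
  induction l with
  | nil => simp [arrCells, bigStar, Spatial.trms] at ht
  | cons n l ih =>
    simp only [arrCells, List.map_cons, bigStar, Spatial.trms, List.mem_append, List.mem_cons,
      List.not_mem_nil, or_false] at ht
    rcases ht with (rfl | rfl) | ht
    exacts [rfl, rfl, ih ht]

end Cells

def pinTerms (s : Stack) (ts : List Trm) : PureF :=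
  bigAnd (ts.map fun t => .eq t (.const (t.eval s)))

theorem sat_pinTerms {s s' : Stack} {ts : List Trm} :
    (pinTerms s ts).sat s' ↔ ∀ t ∈ ts, t.eval s' = t.eval s := by
  induction ts with
  | nil => simp [pinTerms, bigAnd, PureF.sat]
  | cons t ts ih => simp_all [pinTerms, bigAnd, PureF.sat, Trm.eval]

section Biabduction

open Spatial

variable {A B : SymHeap} {s : Stack}

/-- `β(A,B)` forbids a points-to cell of `B` inside an array of `A` and makes pointers of `A` and
`B` at the same address agree, so each pointer cell of `B` either is a pointer cell of `A` with the
right contents or is supplied by the `ptoCells`. -/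
theorem sat_star_arrCells_of_sat_star_ptoCells (hβ : betaSat A B s) {g : ℕ → ℕ}
    (hg : ∀ p ∈ B.spatial.ptos, g (p.1.eval s) = p.2.eval s) {h : Heap}
    (hh : (A.spatial.star
      (ptoCells g (B.spatial.footprint s \ A.spatial.footprint s).toList)).sat s h) :
    (B.spatial.star
      (arrCells (A.spatial.footprint s \ B.spatial.footprint s).toList)).sat s h := by
  obtain ⟨-, ⟨-, hwB⟩, hptoArr, hptoPto⟩ := hβ
  obtain ⟨-, hkeys, hlookup⟩ := sat_iff.1 hh
  simp only [Spatial.ptos, ptos_ptoCells, List.forall_mem_append, List.forall_mem_map] at hlookup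
  refine sat_iff.2 ⟨wellFormed_star.2 ⟨hwB, wellFormed_arrCells _ (Finset.nodup_toList _),
    by simpa [footprint_arrCells] using Finset.disjoint_sdiff⟩, ?_, ?_⟩
  · rw [hkeys, footprint, footprint, footprint_ptoCells, footprint_arrCells,
      Finset.toList_toFinset, Finset.toList_toFinset, Finset.union_sdiff_self_eq_union,
      Finset.union_sdiff_self_eq_union, Finset.union_comm]
  simp only [Spatial.ptos, ptos_arrCells, List.append_nil]
  intro p hp
  by_cases hA : p.1.eval s ∈ A.spatial.footprint s
  · rcases mem_footprint_iff_arrs_or_ptos.1 hA with ⟨q, hq, hqp⟩ | ⟨q, hq, hqp⟩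
    · have := hptoArr p hp q hq
      omega
    · rw [← hqp, hlookup.1 q hq, (hptoPto q hq p hp).resolve_left (not_not.2 hqp)]
  · have hcell : p.1.eval s ∈ (B.spatial.footprint s \ A.spatial.footprint s).toList := by
      simpa using ⟨eval_mem_footprint_of_mem_ptos hp, hA⟩
    simpa [Trm.eval, hg p hp] using hlookup.2 _ hcell

/-- The pure part of `X` pins every term of `A` and `B` to its value under `s`, which reduces the
entailment to the ground one above. -/
theorem hasBiabductionSolution_of_betaSat (hβ : betaSat A B s) : HasBiabductionSolution A B := by
  have hwA : A.spatial.WellFormed s := hβ.1.2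
  have hwB : B.spatial.WellFormed s := hβ.2.1.2
  obtain ⟨heapB, hsatB⟩ := hwB.exists_sat
  set g : ℕ → ℕ := fun n => (heapB.lookup n).getD 0
  have hg : ∀ p ∈ B.spatial.ptos, g (p.1.eval s) = p.2.eval s := fun p hp => by
    simp [g, (sat_iff.1 hsatB).2.2 p hp]
  set FA := A.spatial.footprint s
  set FB := B.spatial.footprint s
  refine ⟨⟨pinTerms s (A.trms ++ B.trms), ptoCells g (FB \ FA).toList⟩,
    ⟨.tru, arrCells (FA \ FB).toList⟩, ?_, ?_⟩
  · have hw : (A.spatial.star (ptoCells g (FB \ FA).toList)).WellFormed s := by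
      refine wellFormed_star.2 ⟨hwA, wellFormed_ptoCells g s (Finset.nodup_toList _), ?_⟩
      simpa [footprint_ptoCells] using Finset.disjoint_sdiff
    obtain ⟨h, hh⟩ := hw.exists_sat
    exact ⟨s, h, ⟨hβ.1.1, sat_pinTerms.2 fun _ _ => rfl⟩, hh⟩
  · rintro s' h ⟨⟨-, hpin⟩, hh⟩
    have hst := sat_pinTerms.1 hpin
    simp only [SymHeap.trms, List.mem_append] at hst
    have hpB : B.pure.sat s' := (PureF.sat_congr fun t ht => hst t (.inr (.inl ht))).2 hβ.2.1.1
    refine ⟨⟨hpB, trivial⟩, (sat_congr ?_).2 (sat_star_arrCells_of_sat_star_ptoCells hβ hg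
      ((sat_congr ?_).1 hh))⟩
    · simp only [SymHeap.star, trms, List.mem_append]
      rintro t (ht | ht)
      exacts [hst t (.inr (.inr ht)), eval_eq_of_mem_trms_arrCells ht]
    · simp only [trms, List.mem_append]
      rintro t (ht | ht)
      exacts [hst t (.inl (.inr ht)), eval_eq_of_mem_trms_ptoCells _ ht]

end Biabduction

theorem stmt_9_general (A B : SymHeap)
    (hseed : ∃ Δ : PureF, IsSolutionSeed A B Δ) :
    ∃ X Y : SymHeap, (A.star X).Satisfiable ∧ Entails (A.star X) (B.star Y) := by
  obtain ⟨Δ, ⟨s, hΔ⟩, hβ, -⟩ := hseed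
  exact hasBiabductionSolution_of_betaSat (hβ s hΔ)

/-- Theorem (seed ⟹ solution): for a biabduction instance `(A,B)` (with `A`, `B`
satisfiable), if there exists a solution seed `Δ` for `(A,B)` then the
biabduction problem `(A,B)` has a solution: there exist quantifier-free
`X`, `Y` with `A*X` satisfiable and `A*X ⊨ B*Y`. -/
theorem stmt_9 (A B : SymHeap) (hA : A.Satisfiable) (hB : B.Satisfiable)
    (hseed : ∃ Δ : PureF, IsSolutionSeed A B Δ) :
    ∃ X Y : SymHeap, (A.star X).Satisfiable ∧ Entails (A.star X) (B.star Y) :=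
  stmt_9_general A B hseed
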